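/- Suppose E, M : [0,∞) → (0,∞) are differentiable, E is nonincreasing, E(t)M(t) ≥ 1 for all t, and |dM/dt|² ≤ K₃ |dE/dt| for some constant K₃ > 0. Then there exist constants K₁, K₂ > 0 (depending only on K₃) such that for all T ≥ K₂ M(0)³, one has [ (1/T) ∫₀^T E(t)² dt ]^{−3/2} ≤ K₁ T. -/
import Mathlib
open Set MeasureTheory intervalIntegral

theorem stmt_19 (K3 : ℝ) (hK3 : 0 < K3) (E M : ℝ → ℝ)
    (hE : Differentiable ℝ E) (hM : Differentiable ℝ M)
    (hEpos : ∀ t, 0 ≤ t → 0 < E t) (hMpos : ∀ t, 0 ≤ t → 0 < M t)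
    (hdec : AntitoneOn E (Set.Ici 0))
    (hinterp : ∀ t, 0 ≤ t → 1 ≤ E t * M t)
    (hdiss : ∀ t, 0 ≤ t → (deriv M t)^2 ≤ K3 * |deriv E t|) :
    ∃ K1 K2 : ℝ, 0 < K1 ∧ 0 < K2 ∧
      ∀ T : ℝ, K2 * (M 0)^3 ≤ T →
        ((1/T) * ∫ t in (0:ℝ)..T, (E t)^2) ^ (-(3:ℝ)/2) ≤ K1 * T := by
  have hm0 : 0 < M 0 := hMpos 0 le_rfl
  have hEc : Continuous E := hE.continuous
  -- derivative of E is nonpositive on (0,∞)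
  have hE' : ∀ t : ℝ, 0 < t → deriv E t ≤ 0 := by
    intro t ht
    have hs : Filter.Tendsto (slope E t) (nhdsWithin t (Set.Ioi t)) (nhds (deriv E t)) :=
      (hasDerivAt_iff_tendsto_slope.mp (hE t).hasDerivAt).mono_left
        (nhdsWithin_mono t (fun x hx => ne_of_gt hx))
    refine le_of_tendsto hs ?_
    filter_upwards [self_mem_nhdsWithin] with x hx
    have h1 : E x ≤ E t := hdec ht.le (ht.trans hx).le (le_of_lt hx)
    have hxt : (0:ℝ) < x - t := sub_pos.mpr hx
    rw [slope_def_field]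
    exact div_nonpos_of_nonpos_of_nonneg (by simp; linarith) hxt.le
  -- constants
  set d : ℝ := (4 * K3 ^ 2) ^ ((1:ℝ)/3) with hd_def
  have hd0 : 0 < d := Real.rpow_pos_of_pos (by positivity) _
  have hd3 : d ^ 3 = 4 * K3 ^ 2 := by
    rw [hd_def, ← Real.rpow_natCast ((4*K3^2) ^ ((1:ℝ)/3)) 3, ← Real.rpow_mul (by positivity)]
    norm_num
  set c : ℝ := min (1/16) d⁻¹ with hc_def
  have hc0 : 0 < c := lt_min (by norm_num) (inv_pos.mpr hd0)
  have hc16 : c ≤ 1/16 := min_le_left _ _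
  have hcd : c ≤ d⁻¹ := min_le_right _ _
  clear_value c
  clear_value d
  refine ⟨c ^ (-(3:ℝ)/2), 1, Real.rpow_pos_of_pos hc0 _, one_pos, ?_⟩
  intro T hT
  rw [one_mul] at hT
  have hT0 : 0 < T := lt_of_lt_of_le (by positivity) hT
  set A := ∫ t in (0:ℝ)..T, (E t)^2 with hA_def
  have hE2int : ∀ u v : ℝ, IntervalIntegrable (fun s => (E s)^2) volume u v :=
    fun u v => (hEc.pow 2).intervalIntegrable u v
  have hA0 : 0 ≤ A := intervalIntegral.integral_nonneg hT0.le (fun s _ => sq_nonneg _)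
  set B := 2 * M 0 + K3 * A with hB_def
  have hB0 : 0 < B := by positivity
  -- key bound : M t ≤ B on [0,T]
  have hkey : ∀ t ∈ Set.Icc (0:ℝ) T, M t ≤ B := by
    rintro t ⟨ht0, htT⟩
    set φ : ℝ → ℝ := fun s => |deriv E s| / (E s)^2 with hφ_def
    set ψ : ℝ → ℝ := fun s => (φ s + K3 * (E s)^2)/2 with hψ_def
    have hφ0 : ∀ s, 0 ≤ φ s := fun s => div_nonneg (abs_nonneg _) (sq_nonneg _)
    have hginv : ∀ s ∈ Set.Ioo (0:ℝ) t, HasDerivAt (fun u => (E u)⁻¹) (φ s) s := by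
      intro s hs
      have h1 : HasDerivAt (fun u => (E u)⁻¹) (-(deriv E s) / (E s)^2) s :=
        (hE s).hasDerivAt.inv (ne_of_gt (hEpos s hs.1.le))
      have h2 : |deriv E s| = -(deriv E s) := abs_of_nonpos (hE' s hs.1)
      rw [hφ_def]; dsimp only; rw [h2]; exact h1
    have hEinvcont : ContinuousOn (fun u => (E u)⁻¹) (Set.Icc 0 t) :=
      ContinuousOn.inv₀ hEc.continuousOn (fun s hs => ne_of_gt (hEpos s hs.1))
    have hφint : IntervalIntegrable φ volume 0 t := by
      apply intervalIntegrable_deriv_of_nonneg (g := fun u => (E u)⁻¹)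
      · rwa [Set.uIcc_of_le ht0]
      · intro x hx
        rw [min_eq_left ht0, max_eq_right ht0] at hx
        exact hginv x hx
      · intro x _
        exact hφ0 x
    have hFTCg : ∫ s in (0:ℝ)..t, φ s = (E t)⁻¹ - (E 0)⁻¹ := by
      refine integral_eq_sub_of_hasDeriv_right_of_le ht0 hEinvcont
        (fun x hx => (hginv x hx).hasDerivWithinAt) hφint
    -- pointwise bound
    have hpt : ∀ s ∈ Set.Icc (0:ℝ) t, |deriv M s| ≤ ψ s := by
      intro s hs
      have hEs : 0 < E s := hEpos s hs.1
      have h1 : (deriv M s)^2 ≤ K3 * |deriv E s| := hdiss s hs.1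
      have hψs : 0 ≤ ψ s := by
        have := hφ0 s
        have h2 : 0 ≤ K3 * (E s)^2 := by positivity
        rw [hψ_def]; dsimp only; linarith
      have h3 : φ s * (K3 * (E s)^2) = K3 * |deriv E s| := by
        rw [hφ_def]; dsimp only; field_simp
      calc |deriv M s| = Real.sqrt ((deriv M s)^2) := (Real.sqrt_sq_eq_abs _).symm
        _ ≤ Real.sqrt ((ψ s)^2) := by
            apply Real.sqrt_le_sqrt
            have hAMGM : φ s * (K3 * (E s)^2) ≤ (ψ s)^2 := by
              rw [hψ_def]; dsimp only; nlinarith [sq_nonneg (φ s - K3 * (E s)^2)]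
            linarith [h1, h3.symm.le, hAMGM]
        _ = ψ s := Real.sqrt_sq hψs
    have hψint : IntervalIntegrable ψ volume 0 t := by
      have h1 : IntervalIntegrable (fun s => K3 * (E s)^2) volume 0 t :=
        (hE2int 0 t).const_mul K3
      exact (hφint.add h1).div_const 2
    have hMint : IntervalIntegrable (deriv M) volume 0 t := by
      rw [intervalIntegrable_iff_integrableOn_Ioc_of_le ht0]
      refine Integrable.mono'
        ((intervalIntegrable_iff_integrableOn_Ioc_of_le ht0).mp hψint)
        ((measurable_deriv M).aestronglyMeasurable.restrict) ?_
      refine (ae_restrict_iff' measurableSet_Ioc).mpr (Filter.Eventually.of_forall ?_)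
      intro s hs
      rw [Real.norm_eq_abs]
      exact hpt s ⟨hs.1.le, hs.2⟩
    have hFTCM : ∫ s in (0:ℝ)..t, deriv M s = M t - M 0 :=
      integral_deriv_eq_sub (fun x _ => hM x) hMint
    have hint2 : ∫ s in (0:ℝ)..t, (E s)^2 ≤ A := by
      refine integral_mono_interval le_rfl ht0 htT ?_ (hE2int 0 T)
      exact Filter.Eventually.of_forall (fun s => sq_nonneg _)
    have hstep : M t - M 0 ≤ (1/2) * (E t)⁻¹ + (K3/2) * A := by
      rw [← hFTCM]
      have h1 : ∫ s in (0:ℝ)..t, deriv M s ≤ ∫ s in (0:ℝ)..t, ψ s :=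
        integral_mono_on ht0 hMint hψint
          (fun s hs => (le_abs_self _).trans (hpt s hs))
      have h2 : ∫ s in (0:ℝ)..t, ψ s
          = ((∫ s in (0:ℝ)..t, φ s) + K3 * ∫ s in (0:ℝ)..t, (E s)^2)/2 := by
        rw [hψ_def]
        rw [intervalIntegral.integral_div]
        rw [intervalIntegral.integral_add hφint ((hE2int 0 t).const_mul K3)]
        rw [intervalIntegral.integral_const_mul]
      have h3 : (0:ℝ) ≤ (E 0)⁻¹ := (inv_pos.mpr (hEpos 0 le_rfl)).le
      rw [h2, hFTCg] at h1
      have h4 : K3 * ∫ s in (0:ℝ)..t, (E s)^2 ≤ K3 * A :=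
        mul_le_mul_of_nonneg_left hint2 hK3.le
      linarith
    have hinvle : (E t)⁻¹ ≤ M t := by
      have h1 := hinterp t ht0
      have h2 := hEpos t ht0
      rw [inv_eq_one_div, div_le_iff₀ h2]
      nlinarith
    rw [hB_def]; linarith
  -- lower bound on A
  have hAlow : T * (B⁻¹)^2 ≤ A := by
    have hmono : ∀ s ∈ Set.Icc (0:ℝ) T, (fun _ => (B⁻¹)^2) s ≤ (fun s => (E s)^2) s := by
      intro s hs
      have hEs := hEpos s hs.1
      have h1 : B⁻¹ ≤ E s := by
        rw [inv_eq_one_div, div_le_iff₀ hB0]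
        calc (1:ℝ) ≤ E s * M s := hinterp s hs.1
          _ ≤ E s * B := mul_le_mul_of_nonneg_left (hkey s hs) hEs.le
      exact pow_le_pow_left₀ (inv_pos.mpr hB0).le h1 2
    have := integral_mono_on hT0.le (intervalIntegrable_const) (hE2int 0 T) hmono
    rw [intervalIntegral.integral_const, smul_eq_mul, sub_zero] at this
    exact this
  clear_value A
  clear_value B
  -- cube root of T
  set u := T ^ ((1:ℝ)/3) with hu_def
  have hu0 : 0 < u := Real.rpow_pos_of_pos hT0 _
  have hu3 : u^3 = T := by
    rw [hu_def, ← Real.rpow_natCast (T ^ ((1:ℝ)/3)) 3, ← Real.rpow_mul hT0.le]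
    norm_num
  clear_value u
  have hM0u : M 0 ≤ u := by
    have h1 : (M 0)^3 ≤ u^3 := by rw [hu3]; linarith
    exact le_of_pow_le_pow_left₀ (by norm_num) hu0.le h1
  -- main lower bound A ≥ c * u
  have hcu : c * u ≤ A := by
    have hTB : T ≤ A * B^2 := by
      have h1 : T * (B⁻¹)^2 = T / B^2 := by rw [inv_pow]; ring
      rw [h1, div_le_iff₀ (by positivity)] at hAlow
      linarith
    rcases le_or_gt B (4 * M 0) with hB4 | hB4
    · have hB4u : B ≤ 4 * u := by linarith
      have hB2 : B^2 ≤ 16 * u^2 := by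
        nlinarith [mul_nonneg (by linarith : (0:ℝ) ≤ 4*u - B) (by linarith : (0:ℝ) ≤ 4*u + B)]
      have h2 : c * u ≤ u/16 := by
        have := min_le_left (1/16 : ℝ) d⁻¹
        calc c * u ≤ (1/16) * u := mul_le_mul_of_nonneg_right (hc16) hu0.le
          _ = u/16 := by ring
      have h3 : u/16 ≤ A := by
        have h4 : u * B^2 ≤ 16 * T := by
          calc u * B^2 ≤ u * (16 * u^2) := mul_le_mul_of_nonneg_left hB2 hu0.le
            _ = 16 * u^3 := by ring
            _ = 16 * T := by rw [hu3]
        -- T ≤ A * B², so u * B² ≤ 16 T ≤ 16 A B²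
        have h5 : u * B^2 ≤ (16 * A) * B^2 := le_trans h4 (by linarith)
        have h6 : u ≤ 16 * A := le_of_mul_le_mul_right h5 (pow_pos hB0 2)
        linarith
      linarith
    · have hApos : 0 < A := lt_of_lt_of_le (by positivity) hAlow
      have h2 : B < 2*(K3*A) := by rw [hB_def] at hB4 ⊢; linarith
      have h3 : u^3 < (d*A)^3 := by
        have hB2 : B^2 < (2*(K3*A))^2 := by
          apply sq_lt_sq' _ h2
          have := mul_pos hK3 hApos
          linarith
        calc u^3 = T := hu3
          _ ≤ A * B^2 := hTB
          _ < A * (2*(K3*A))^2 := mul_lt_mul_of_pos_left hB2 hApos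
          _ = (d*A)^3 := by rw [mul_pow d A 3, hd3]; ring
      have h4 : u < d*A := lt_of_pow_lt_pow_left₀ 3 (by positivity) h3
      have h5 : c * u ≤ d⁻¹ * u := mul_le_mul_of_nonneg_right
        hcd hu0.le
      have h6 : d⁻¹ * u ≤ A := by
        rw [inv_mul_le_iff₀ hd0]
        linarith
      linarith
  -- final rpow computation
  have hxle : c / u^2 ≤ (1/T) * A := by
    have h1 : c / u^2 = (1/T) * (c*u) := by
      rw [← hu3]; field_simp
    rw [h1]
    apply mul_le_mul_of_nonneg_left hcu (by positivity)
  have hx0 : 0 < c / u^2 := by positivity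
  have h5 : ((1/T) * A) ^ (-(3:ℝ)/2) ≤ (c/u^2) ^ (-(3:ℝ)/2) :=
    Real.rpow_le_rpow_of_nonpos hx0 hxle (by norm_num)
  have h6 : (c/u^2) ^ (-(3:ℝ)/2) = c ^ (-(3:ℝ)/2) * T := by
    rw [div_eq_mul_inv, Real.mul_rpow hc0.le (by positivity)]
    congr 1
    rw [← Real.rpow_natCast u 2, ← Real.rpow_neg hu0.le, ← Real.rpow_mul hu0.le]
    rw [← hu3, ← Real.rpow_natCast u 3]
    norm_num
  rw [h6] at h5
  exact h5
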